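/- Let A and S be 2×2 real symmetric matrices with tr(A S) = 0, and suppose λ I ≤ A ≤ Λ I in the Loewner order for constants 0 < λ ≤ Λ. Then tr(S A² S) ≤ c · (− det(A) det(S)), where c = (Λ/λ)² (Λ/λ + λ/Λ). (Geometrically: the trace of the pullback metric S A_γ² S via the anisotropic Gauss map is bounded by −c(γ) K_γ, where K_γ = det(A_γ S) is the anisotropic Gaussian curvature.) -/

import Mathlib

/-!
For every 2×2 matrix, `tr(S A² S) + (tr S)² det A + tr(A²) det S = tr(A S) tr A tr S`, so
`tr(A S) = 0` gives `tr(S A² S) ≤ tr(A²) (−det S)`. If `α, β ∈ [λ, Λ]` are the eigenvalues of `A`,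
then `tr(A²) / det A = α/β + β/α ≤ Λ/λ + λ/Λ`, which is at most `c` because `Λ/λ ≥ 1`.
-/

namespace Matrix

section Eigenvalues

variable {n : Type*} [Fintype n] [DecidableEq n] {A : Matrix n n ℝ}

lemma IsHermitian.star_eigenvectorBasis_dotProduct_self (hA : A.IsHermitian) (i : n) :
    star (hA.eigenvectorBasis i).ofLp ⬝ᵥ (hA.eigenvectorBasis i).ofLp = 1 := by
  rw [dotProduct_comm, ← EuclideanSpace.inner_eq_star_dotProduct, real_inner_self_eq_norm_sq,
    hA.eigenvectorBasis.orthonormal.1 i, one_pow]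

lemma IsHermitian.star_eigenvectorBasis_dotProduct_sub_smul_one_mulVec (hA : A.IsHermitian)
    (c : ℝ) (i : n) :
    star (hA.eigenvectorBasis i).ofLp ⬝ᵥ ((A - c • 1) *ᵥ (hA.eigenvectorBasis i).ofLp) =
      hA.eigenvalues i - c := by
  rw [sub_mulVec, smul_mulVec, one_mulVec, dotProduct_sub, dotProduct_smul,
    hA.star_eigenvectorBasis_dotProduct_self, hA.eigenvalues_eq, RCLike.re_to_real, smul_eq_mul,
    mul_one]

lemma IsHermitian.le_eigenvalues_of_posSemidef_sub_smul_one (hA : A.IsHermitian) {c : ℝ}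
    (h : (A - c • 1).PosSemidef) (i : n) : c ≤ hA.eigenvalues i := by
  have := h.dotProduct_mulVec_nonneg (hA.eigenvectorBasis i).ofLp
  rwa [hA.star_eigenvectorBasis_dotProduct_sub_smul_one_mulVec, sub_nonneg] at this

lemma IsHermitian.eigenvalues_le_of_posSemidef_smul_one_sub (hA : A.IsHermitian) {c : ℝ}
    (h : (c • 1 - A).PosSemidef) (i : n) : hA.eigenvalues i ≤ c := by
  have := h.dotProduct_mulVec_nonneg (hA.eigenvectorBasis i).ofLp
  rwa [← neg_sub, neg_mulVec, dotProduct_neg,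
    hA.star_eigenvectorBasis_dotProduct_sub_smul_one_mulVec, neg_nonneg, sub_nonpos] at this

end Eigenvalues

lemma IsHermitian.exists_eigenvalues_fin_two {A : Matrix (Fin 2) (Fin 2) ℝ} (hA : A.IsHermitian)
    {lam Lam : ℝ} (hlow : (A - lam • 1).PosSemidef) (hupp : (Lam • 1 - A).PosSemidef) :
    ∃ α β : ℝ, α ∈ Set.Icc lam Lam ∧ β ∈ Set.Icc lam Lam ∧ A.trace = α + β ∧ A.det = α * β :=
  ⟨hA.eigenvalues 0, hA.eigenvalues 1,
    ⟨hA.le_eigenvalues_of_posSemidef_sub_smul_one hlow 0,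
      hA.eigenvalues_le_of_posSemidef_smul_one_sub hupp 0⟩,
    ⟨hA.le_eigenvalues_of_posSemidef_sub_smul_one hlow 1,
      hA.eigenvalues_le_of_posSemidef_smul_one_sub hupp 1⟩,
    by simp [hA.trace_eq_sum_eigenvalues, Fin.sum_univ_two],
    by simp [hA.det_eq_prod_eigenvalues, Fin.prod_univ_two]⟩

lemma trace_mul_self_fin_two {R : Type*} [CommRing R] (A : Matrix (Fin 2) (Fin 2) R) :
    (A * A).trace = A.trace ^ 2 - 2 * A.det := by
  simp only [trace_fin_two, det_fin_two, mul_apply, Fin.sum_univ_two]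
  ring

lemma trace_mul_mul_self_mul_fin_two {R : Type*} [CommRing R] (A S : Matrix (Fin 2) (Fin 2) R) :
    (S * (A * A) * S).trace + S.trace ^ 2 * A.det + (A * A).trace * S.det =
      (A * S).trace * A.trace * S.trace := by
  simp only [trace_fin_two, det_fin_two, mul_apply, Fin.sum_univ_two]
  ring

lemma IsHermitian.trace_mul_mul_self_mul_nonneg {n : Type*} [Fintype n] {A S : Matrix n n ℝ}
    (hA : A.IsHermitian) (hS : S.IsHermitian) : 0 ≤ (S * (A * A) * S).trace := by
  have : S * (A * A) * S = (A * S)ᴴ * (A * S) := by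
    rw [conjTranspose_mul, hA.eq, hS.eq, Matrix.mul_assoc, Matrix.mul_assoc, Matrix.mul_assoc]
  rw [this]
  exact (posSemidef_conjTranspose_mul_self _).trace_nonneg

end Matrix

lemma sq_add_sq_le_mul_of_mem_Icc {lam Lam α β : ℝ} (hlam : 0 < lam)
    (hα : α ∈ Set.Icc lam Lam) (hβ : β ∈ Set.Icc lam Lam) :
    α ^ 2 + β ^ 2 ≤ (Lam / lam + lam / Lam) * (α * β) := by
  obtain ⟨hα₁, hα₂⟩ := hα
  obtain ⟨hβ₁, hβ₂⟩ := hβ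
  have hLam : 0 < Lam := by linarith
  rw [div_add_div _ _ hlam.ne' hLam.ne', div_mul_eq_mul_div, le_div_iff₀ (by positivity)]
  nlinarith [mul_nonneg (by nlinarith : 0 ≤ Lam * β - lam * α)
    (by nlinarith : 0 ≤ Lam * α - lam * β)]

open Matrix

/-- If `A` and `S` are 2×2 real symmetric matrices with `tr(A S) = 0` and
`λ I ≤ A ≤ Λ I` in the Loewner order for some `0 < λ ≤ Λ`, then
`tr(S A² S) ≤ c (−det(A) det(S))` with `c = (Λ/λ)² (Λ/λ + λ/Λ)`. -/
theorem trace_pullback_metric_bound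
    (A S : Matrix (Fin 2) (Fin 2) ℝ) (hA : A.IsSymm) (hS : S.IsSymm)
    (htr : (A * S).trace = 0)
    (lam Lam : ℝ) (hlam : 0 < lam) (hlamLam : lam ≤ Lam)
    (hlow : (A - lam • (1 : Matrix (Fin 2) (Fin 2) ℝ)).PosSemidef)
    (hupp : ((Lam • (1 : Matrix (Fin 2) (Fin 2) ℝ)) - A).PosSemidef) :
    (S * (A * A) * S).trace
      ≤ (Lam / lam) ^ 2 * (Lam / lam + lam / Lam) * (-(A.det * S.det)) := by
  have hA' : A.IsHermitian := isHermitian_iff_isSymm.mpr hA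
  have hS' : S.IsHermitian := isHermitian_iff_isSymm.mpr hS
  obtain ⟨α, β, hα, hβ, htrA, hdetA⟩ := hA'.exists_eigenvalues_fin_two hlow hupp
  have hα₀ : 0 < α := hlam.trans_le hα.1
  have hβ₀ : 0 < β := hlam.trans_le hβ.1
  have hsq : (A * A).trace = α ^ 2 + β ^ 2 := by
    rw [trace_mul_self_fin_two, htrA, hdetA]; ring
  have hidentity := trace_mul_mul_self_mul_fin_two A S
  rw [htr, hsq, hdetA, zero_mul, zero_mul] at hidentity
  have hL := hA'.trace_mul_mul_self_mul_nonneg hS'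
  have hcorr : 0 ≤ S.trace ^ 2 * (α * β) := by positivity
  have hdetS : 0 ≤ -S.det :=
    nonneg_of_mul_nonneg_right (a := α ^ 2 + β ^ 2) (by linarith) (by positivity)
  have hLam : 0 < Lam := hlam.trans_le hlamLam
  have hratio : 1 ≤ (Lam / lam) ^ 2 := one_le_pow₀ ((one_le_div hlam).mpr hlamLam)
  rw [hdetA]
  calc (S * (A * A) * S).trace ≤ (α ^ 2 + β ^ 2) * -S.det := by linarith
    _ ≤ (Lam / lam + lam / Lam) * (α * β) * -S.det :=
        mul_le_mul_of_nonneg_right (sq_add_sq_le_mul_of_mem_Icc hlam hα hβ) hdetS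
    _ ≤ (Lam / lam) ^ 2 * ((Lam / lam + lam / Lam) * (α * β) * -S.det) :=
        le_mul_of_one_le_left (by positivity) hratio
    _ = (Lam / lam) ^ 2 * (Lam / lam + lam / Lam) * (-(α * β * S.det)) := by ring
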